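/- Let N ≥ 2 be an integer and let p, μ, m be real numbers with 1 < p < N, 0 ≤ μ < μ̄ := ((N−p)/p)^p and m > 0. Let f : ℝ → ℝ be continuous and satisfy (F0). Let u : (0,∞) → ℝ be a radial profile solution of the equation (hypothesis (S)) such that u(r) → 0 as r → ∞. Define φ(r) = −|u'(r)|^{p−2}u'(r)/u(r)^{p−1}. Then the function r ↦ φ(r) − (m/(p−1))^{(p−1)/p} is O(1/r) as r → ∞. -/

import Mathlib

/-!
For large `r` the profile is decreasing: once the forcing `e = μ r^{-p} + f(u)/u^{p-1}` (which
tends to `0` by (F0)) is below `m`, the weighted flux `r^{N-1}|u'|^{p-2}u'` is nondecreasing,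
and a nonnegative flux would make `u` nondecreasing, contradicting `0 < u → 0`. Hence
`φ = (-u'/u)^{p-1} > 0` solves the Riccati equation
`φ' = (p-1) φ^{p/(p-1)} - m - (N-1) φ / r + e(r)`. A positive solution can neither exceed the
equilibrium `c = (m/(p-1))^{(p-1)/p}` by a fixed amount (it would blow up in finite time) nor
stay below it (it would become negative), so `φ → c`. Then `-u'/u` is bounded below, `u` decays
exponentially, `e = O(1/r)`, and comparison with the barriers `c ± C/r`, using that
`(p-1) x^{p/(p-1)} - m` grows at least linearly across `c`, gives `φ - c = O(1/r)`.
-/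

open Filter Topology Set Asymptotics

lemma monotoneOn_Ici_of_hasDerivAt_nonneg {f f' : ℝ → ℝ} {a : ℝ}
    (hf : ∀ x ≥ a, HasDerivAt f (f' x) x) (hf' : ∀ x ≥ a, 0 ≤ f' x) :
    MonotoneOn f (Ici a) :=
  monotoneOn_of_hasDerivWithinAt_nonneg (convex_Ici a)
    (fun x hx => (hf x hx).continuousAt.continuousWithinAt)
    (fun x hx => (hf x (interior_subset hx)).hasDerivWithinAt)
    (fun x hx => hf' x (interior_subset hx))

lemma le_of_hasDerivAt_of_eq_imp_lt {f f' g g' : ℝ → ℝ} {a : ℝ}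
    (hf : ∀ x ≥ a, HasDerivAt f (f' x) x) (hg : ∀ x ≥ a, HasDerivAt g (g' x) x)
    (ha : f a ≤ g a) (hfg : ∀ x ≥ a, f x = g x → f' x < g' x) :
    ∀ x ≥ a, f x ≤ g x := fun b hb =>
  image_le_of_deriv_right_lt_deriv_boundary' (b := b)
    (fun x hx => (hf x hx.1).continuousAt.continuousWithinAt)
    (fun x hx => (hf x hx.1).hasDerivWithinAt) ha
    (fun x hx => (hg x hx.1).continuousAt.continuousWithinAt)
    (fun x hx => (hg x hx.1).hasDerivWithinAt) (fun x hx => hfg x hx.1) ⟨hb, le_rfl⟩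

lemma not_forall_pos_of_hasDerivAt_le_neg {f f' : ℝ → ℝ} {a ρ : ℝ} (hρ : 0 < ρ)
    (hf : ∀ x ≥ a, HasDerivAt f (f' x) x) (hf' : ∀ x ≥ a, f' x ≤ -ρ) :
    ¬ ∀ x ≥ a, 0 < f x := by
  intro hpos
  have hmono : MonotoneOn (fun x => -f x - ρ * x) (Ici a) :=
    monotoneOn_Ici_of_hasDerivAt_nonneg
      (fun x hx => ((hf x hx).neg.sub ((hasDerivAt_id x).const_mul ρ)))
      (fun x hx => by linarith [hf' x hx])
  set b := a + |f a| / ρ + 1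
  have hab : a ≤ b := by have := div_nonneg (abs_nonneg (f a)) hρ.le; linarith
  have key := hmono self_mem_Ici hab hab
  have hρb : ρ * (b - a) = |f a| + ρ := by
    simp only [b]; field_simp; ring
  simp only at key
  linarith [hpos b hab, le_abs_self (f a)]

lemma not_forall_pos_of_hasDerivAt_ge_rpow {f f' : ℝ → ℝ} {a ε P : ℝ} (hε : 0 < ε)
    (hP : 1 < P) (hf : ∀ x ≥ a, HasDerivAt f (f' x) x) (hf' : ∀ x ≥ a, ε * f x ^ P ≤ f' x) :
    ¬ ∀ x ≥ a, 0 < f x := by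
  intro hpos
  -- `f ^ (1 - P)` stays positive while decreasing at rate at least `(P - 1) ε`
  refine not_forall_pos_of_hasDerivAt_le_neg (f := fun x => f x ^ (1 - P))
    (mul_pos (sub_pos.2 hP) hε)
    (fun x hx => (hf x hx).rpow_const (Or.inl (hpos x hx).ne')) (fun x hx => ?_)
    (fun x hx => Real.rpow_pos_of_pos (hpos x hx) _)
  have hfx := hpos x hx
  have hprod : f x ^ (1 - P - 1) * f x ^ P = 1 := by
    rw [← Real.rpow_add hfx]; norm_num
  have key : ε ≤ f x ^ (1 - P - 1) * f' x := by
    calc ε = f x ^ (1 - P - 1) * (ε * f x ^ P) := by rw [mul_left_comm, hprod, mul_one]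
      _ ≤ f x ^ (1 - P - 1) * f' x :=
        mul_le_mul_of_nonneg_left (hf' x hx) (Real.rpow_pos_of_pos hfx _).le
  nlinarith

section Riccati

variable {φ φ' e d d' E : ℝ → ℝ} {α m κ P b c γ : ℝ}

lemma eventually_le_of_hasDerivAt_ge_rpow {ε : ℝ} (hε : 0 < ε) (hP : 1 < P) (hb : 0 < b)
    (hφ : ∀ᶠ r in atTop, 0 < φ r ∧ HasDerivAt φ (φ' r) r ∧ (b ≤ φ r → ε * φ r ^ P ≤ φ' r)) :
    ∀ᶠ r in atTop, φ r ≤ b := by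
  obtain ⟨R, hR⟩ := eventually_atTop.1 hφ
  refine eventually_atTop.2 ⟨R, fun r₀ hr₀ => le_of_not_gt fun hbφ => ?_⟩
  have hder : ∀ x ≥ r₀, HasDerivAt φ (φ' x) x := fun x hx => (hR x (hr₀.trans hx)).2.1
  have hgrowth : ∀ x ≥ r₀, b ≤ φ x → ε * φ x ^ P ≤ φ' x := fun x hx =>
    (hR x (hr₀.trans hx)).2.2
  have habove : ∀ x ≥ r₀, b ≤ φ x :=
    le_of_hasDerivAt_of_eq_imp_lt (fun x _ => hasDerivAt_const x b) hder hbφ.le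
      fun x hx hbx => (mul_pos hε (Real.rpow_pos_of_pos hb P)).trans_le
        (hbx ▸ hgrowth x hx hbx.le)
  exact not_forall_pos_of_hasDerivAt_ge_rpow hε hP hder
    (fun x hx => hgrowth x hx (habove x hx)) (fun x hx => (hR x (hr₀.trans hx)).1)

lemma eventually_ge_of_hasDerivAt_le_neg {ρ : ℝ} (hρ : 0 < ρ)
    (hφ : ∀ᶠ r in atTop, 0 < φ r ∧ HasDerivAt φ (φ' r) r ∧ (φ r ≤ b → φ' r ≤ -ρ)) :
    ∀ᶠ r in atTop, b ≤ φ r := by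
  obtain ⟨R, hR⟩ := eventually_atTop.1 hφ
  refine eventually_atTop.2 ⟨R, fun r₀ hr₀ => le_of_not_gt fun hφb => ?_⟩
  have hder : ∀ x ≥ r₀, HasDerivAt φ (φ' x) x := fun x hx => (hR x (hr₀.trans hx)).2.1
  have hdecay : ∀ x ≥ r₀, φ x ≤ b → φ' x ≤ -ρ := fun x hx => (hR x (hr₀.trans hx)).2.2
  have hbelow : ∀ x ≥ r₀, φ x ≤ b :=
    le_of_hasDerivAt_of_eq_imp_lt hder (fun x _ => hasDerivAt_const x b) hφb.le
      fun x hx hφx => (hdecay x hx hφx.le).trans_lt (by linarith)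
  exact not_forall_pos_of_hasDerivAt_le_neg hρ hder
    (fun x hx => hdecay x hx (hbelow x hx)) (fun x hx => (hR x (hr₀.trans hx)).1)

lemma eventually_le_of_riccati (hP : 1 < P) (hm : 0 ≤ m) (hb : 0 < b) (hbm : m < α * b ^ P)
    (he : Tendsto e atTop (𝓝 0))
    (hφ : ∀ᶠ r in atTop, 0 < φ r ∧ HasDerivAt φ (φ' r) r ∧
      α * φ r ^ P - m - κ * φ r / r + e r ≤ φ' r) :
    ∀ᶠ r in atTop, φ r ≤ b := by
  have hbP : 0 < b ^ P := Real.rpow_pos_of_pos hb P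
  -- chosen so that `ε x ^ P ≤ α x ^ P - m` for `x ≥ b`
  set ε := (α * b ^ P - m) / b ^ P
  have hε : 0 < ε := div_pos (by linarith) hbP
  have hκ : ∀ᶠ r in atTop, |κ| / r ≤ ε * b ^ (P - 1) / 4 :=
    (tendsto_const_nhds.div_atTop tendsto_id).eventually
      (ge_mem_nhds (by have := Real.rpow_pos_of_pos hb (P - 1); positivity))
  have he' : ∀ᶠ r in atTop, -(ε * b ^ P / 4) ≤ e r :=
    he.eventually (Ici_mem_nhds (by linarith [mul_pos hε hbP]))
  refine eventually_le_of_hasDerivAt_ge_rpow (φ' := φ') (half_pos hε) hP hb ?_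
  filter_upwards [hφ, hκ, he', eventually_gt_atTop 0] with r ⟨hφr, hder, hφ'⟩ hκr her hr
  refine ⟨hφr, hder, fun hbr => ?_⟩
  have hPb : b ^ P ≤ φ r ^ P := Real.rpow_le_rpow hb.le hbr (by linarith)
  have hP1 : b ^ (P - 1) ≤ φ r ^ (P - 1) := Real.rpow_le_rpow hb.le hbr (by linarith)
  have hsplit : φ r ^ P = φ r ^ (P - 1) * φ r := by
    rw [← Real.rpow_add_one hφr.ne']; ring_nf
  have hmain : ε * φ r ^ P ≤ α * φ r ^ P - m := by
    have : m * b ^ P ≤ m * φ r ^ P := mul_le_mul_of_nonneg_left hPb hm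
    simp only [ε]
    rw [div_mul_eq_mul_div, div_le_iff₀ hbP]
    nlinarith
  have hdrift : κ * φ r / r ≤ ε * φ r ^ P / 4 := by
    calc κ * φ r / r ≤ |κ| / r * φ r := by
          rw [div_mul_eq_mul_div]
          exact div_le_div_of_nonneg_right
            (mul_le_mul_of_nonneg_right (le_abs_self κ) hφr.le) hr.le
      _ ≤ ε * b ^ (P - 1) / 4 * φ r := mul_le_mul_of_nonneg_right hκr hφr.le
      _ ≤ ε * φ r ^ P / 4 := by
          rw [hsplit]; nlinarith [mul_le_mul_of_nonneg_left hP1 hε.le]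
  nlinarith [mul_le_mul_of_nonneg_left hPb hε.le]

lemma eventually_ge_of_riccati (hα : 0 ≤ α) (hP : 0 ≤ P) (hbm : α * b ^ P < m)
    (he : Tendsto e atTop (𝓝 0))
    (hφ : ∀ᶠ r in atTop, 0 < φ r ∧ HasDerivAt φ (φ' r) r ∧ φ' r ≤ α * φ r ^ P - m + e r) :
    ∀ᶠ r in atTop, b ≤ φ r := by
  have hη : 0 < m - α * b ^ P := sub_pos.2 hbm
  refine eventually_ge_of_hasDerivAt_le_neg (φ' := φ') (half_pos hη) ?_
  filter_upwards [hφ, he.eventually (Iic_mem_nhds (half_pos hη))] with r ⟨hφr, hder, hφ'⟩ her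
  refine ⟨hφr, hder, fun hφb => ?_⟩
  have := mul_le_mul_of_nonneg_left (Real.rpow_le_rpow hφr.le hφb hP) hα
  linarith

lemma tendsto_of_riccati (hα : 0 < α) (hP : 1 < P) (hc : 0 < c)
    (hcm : α * c ^ P = m) (he : Tendsto e atTop (𝓝 0))
    (hφ : ∀ᶠ r in atTop, 0 < φ r ∧ HasDerivAt φ (α * φ r ^ P - m - κ * φ r / r + e r) r) :
    Tendsto φ atTop (𝓝 c) := by
  have hm : 0 ≤ m := hcm ▸ (mul_pos hα (Real.rpow_pos_of_pos hc P)).le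
  have hφ' : ∀ᶠ r in atTop, 0 < φ r ∧ HasDerivAt φ _ r ∧
      α * φ r ^ P - m - κ * φ r / r + e r ≤ _ := hφ.mono fun r h => ⟨h.1, h.2, le_rfl⟩
  have hmono : StrictMonoOn (fun x : ℝ => α * x ^ P) (Ici 0) := fun x hx y _ hxy =>
    mul_lt_mul_of_pos_left (Real.rpow_lt_rpow hx hxy (by linarith)) hα
  have hupper : ∀ b > c, ∀ᶠ r in atTop, φ r ≤ b := fun b hb =>
    eventually_le_of_riccati hP hm (hc.trans hb)
      (by rw [← hcm]; exact hmono hc.le (hc.trans hb).le hb) he hφ'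
  have hdrift : Tendsto (fun r => -(κ * φ r / r)) atTop (𝓝 0) := by
    refine squeeze_zero_norm' ?_ ((tendsto_const_nhds (x := |κ| * (c + 1))).div_atTop tendsto_id)
    filter_upwards [hφ, hupper (c + 1) (by linarith), eventually_gt_atTop 0]
      with r hφr hφc hr
    rw [norm_neg, Real.norm_eq_abs, abs_div, abs_mul, abs_of_pos hφr.1, abs_of_pos hr]
    gcongr
    exact le_rfl
  refine tendsto_order.2 ⟨fun b hb => ?_, fun b hb => ?_⟩
  · obtain hb0 | hb0 := le_or_gt b 0
    · exact hφ.mono fun r h => hb0.trans_lt h.1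
    · have := eventually_ge_of_riccati (α := α) (P := P) (m := m) (b := (b + c) / 2) hα.le
        (by linarith) (by rw [← hcm]; exact hmono (mem_Ici.2 (by positivity)) hc.le (by linarith))
        (by simpa using he.add hdrift)
        (hφ.mono fun r h => ⟨h.1, h.2, by linarith⟩)
      exact this.mono fun r h => by linarith
  · exact (hupper ((c + b) / 2) (by linarith)).mono fun r h => by linarith

lemma monotoneOn_mul_rpow_sub_mul {a : ℝ} (hα : 0 ≤ α) (hP : 1 ≤ P) (ha : 0 < a)
    (hγ : γ ≤ α * P * a ^ (P - 1)) : MonotoneOn (fun x => α * x ^ P - γ * x) (Ici a) := by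
  refine monotoneOn_Ici_of_hasDerivAt_nonneg (f' := fun x => α * (P * x ^ (P - 1)) - γ)
    (fun x hx => ((Real.hasDerivAt_rpow_const (Or.inr hP)).const_mul α).sub
      ((hasDerivAt_id x).const_mul γ |>.congr_deriv (mul_one γ))) fun x hx => ?_
  have := Real.rpow_le_rpow ha.le hx (by linarith : 0 ≤ P - 1)
  have : α * P * a ^ (P - 1) ≤ α * P * x ^ (P - 1) :=
    mul_le_mul_of_nonneg_left this (by positivity)
  linarith

lemma eventually_le_mul_inv_of_hasDerivAt {K : ℝ} (hγ : 0 < γ) (hK : 0 < K)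
    (hd0 : Tendsto d atTop (𝓝 0))
    (hd : ∀ᶠ r in atTop, HasDerivAt d (d' r) r ∧ (0 ≤ d r → γ * d r - K * r⁻¹ ≤ d' r)) :
    ∀ᶠ r in atTop, d r ≤ 2 * K / γ * r⁻¹ := by
  -- above the barrier `C / r`, `d` would be nondecreasing and positive
  set C := 2 * K / γ
  have hC : 0 < C := by positivity
  have hγC : γ * C = 2 * K := by simp only [C]; field_simp
  obtain ⟨R, hR⟩ := eventually_atTop.1 (hd.and (eventually_gt_atTop 0))
  refine eventually_atTop.2 ⟨R, fun r₀ hr₀ => le_of_not_gt fun hdr₀ => ?_⟩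
  have hder : ∀ x ≥ r₀, HasDerivAt d (d' x) x := fun x hx => (hR x (hr₀.trans hx)).1.1
  have hpos : ∀ x ≥ r₀, 0 < x := fun x hx => (hR x (hr₀.trans hx)).2
  have hslope : ∀ x ≥ r₀, C * x⁻¹ ≤ d x → K * x⁻¹ ≤ d' x := by
    intro x hx hCx
    have hx0 := hpos x hx
    have hdx := (hR x (hr₀.trans hx)).1.2 ((by positivity : 0 ≤ C * x⁻¹).trans hCx)
    have := mul_le_mul_of_nonneg_left hCx hγ.le
    rw [← mul_assoc, hγC] at this
    linarith
  have habove : ∀ x ≥ r₀, C * x⁻¹ ≤ d x :=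
    le_of_hasDerivAt_of_eq_imp_lt (fun x hx => (hasDerivAt_inv (hpos x hx).ne').const_mul C)
      hder hdr₀.le fun x hx hCx => by
        have hx0 := hpos x hx
        have := hslope x hx hCx.le
        have : 0 < C * (x ^ 2)⁻¹ := by positivity
        have : 0 < K * x⁻¹ := by positivity
        linarith
  have hmono := monotoneOn_Ici_of_hasDerivAt_nonneg hder fun x hx =>
    (by have := hpos x hx; positivity : 0 ≤ K * x⁻¹).trans (hslope x hx (habove x hx))
  have hlim : d r₀ ≤ 0 := ge_of_tendsto hd0 ((eventually_ge_atTop r₀).mono fun x hx =>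
    hmono self_mem_Ici hx hx)
  have := hpos r₀ le_rfl
  have : 0 < C * r₀⁻¹ := by positivity
  linarith

lemma isBigO_inv_of_hasDerivAt {E : ℝ → ℝ} (hγ : 0 < γ) (hd0 : Tendsto d atTop (𝓝 0))
    (hE : E =O[atTop] fun r => r⁻¹)
    (hd : ∀ᶠ r in atTop, HasDerivAt d (d' r) r ∧ (0 ≤ d r → γ * d r + E r ≤ d' r) ∧
      (d r ≤ 0 → d' r ≤ γ * d r + E r)) :
    d =O[atTop] fun r => r⁻¹ := by
  obtain ⟨K, hK, hKE⟩ := hE.exists_pos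
  have hEK : ∀ᶠ r in atTop, |E r| ≤ K * r⁻¹ := by
    filter_upwards [hKE.bound, eventually_gt_atTop 0] with r h hr
    simpa [abs_of_pos hr] using h
  have hupper := eventually_le_mul_inv_of_hasDerivAt hγ hK hd0 <| by
    filter_upwards [hd, hEK] with r hdr hE
    exact ⟨hdr.1, fun h => by linarith [(abs_le.1 hE).1, hdr.2.1 h]⟩
  have hlower := eventually_le_mul_inv_of_hasDerivAt (d := fun r => -d r) (d' := fun r => -d' r)
    hγ hK (by simpa using hd0.neg) <| by
    filter_upwards [hd, hEK] with r hdr hE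
    exact ⟨hdr.1.neg, fun h => by linarith [(abs_le.1 hE).2, hdr.2.2 (by linarith)]⟩
  refine IsBigO.of_bound (2 * K / γ) ?_
  filter_upwards [hupper, hlower, eventually_gt_atTop 0] with r hu hl hr
  rw [Real.norm_eq_abs, Real.norm_eq_abs, abs_inv, abs_of_pos hr, abs_le]
  exact ⟨by linarith, hu⟩

lemma isBigO_sub_of_riccati (hα : 0 < α) (hP : 1 ≤ P) (hc : 0 < c) (hcm : α * c ^ P = m)
    (hlim : Tendsto φ atTop (𝓝 c)) (hE : E =O[atTop] fun r => r⁻¹)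
    (hφ : ∀ᶠ r in atTop, HasDerivAt φ (α * φ r ^ P - m + E r) r) :
    (fun r => φ r - c) =O[atTop] fun r => r⁻¹ := by
  have hmono := monotoneOn_mul_rpow_sub_mul hα.le hP (half_pos hc)
    (le_refl (α * P * (c / 2) ^ (P - 1)))
  refine isBigO_inv_of_hasDerivAt (d' := fun r => α * φ r ^ P - m + E r)
    (γ := α * P * (c / 2) ^ (P - 1)) (by positivity)
    (by simpa using hlim.sub_const c) hE ?_
  filter_upwards [hφ, hlim.eventually (Ici_mem_nhds (half_lt_self hc))] with r hr hφr
  refine ⟨hr.sub_const c, fun h => ?_, fun h => ?_⟩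
  · have := hmono (half_le_self hc.le) (hφr.trans (by linarith)) (by linarith : c ≤ φ r)
    simp only at this
    linarith
  · have := hmono hφr (half_le_self hc.le) (by linarith : φ r ≤ c)
    simp only at this
    linarith

end Riccati

lemma isBigO_exp_of_hasDerivAt_le {u u' : ℝ → ℝ} {k : ℝ}
    (hu : ∀ᶠ r in atTop, 0 < u r ∧ HasDerivAt u (u' r) r ∧ u' r ≤ -k * u r) :
    u =O[atTop] fun r => Real.exp (-k * r) := by
  obtain ⟨R, hR⟩ := eventually_atTop.1 hu
  have hanti : MonotoneOn (fun r => -(u r * Real.exp (k * r))) (Ici R) :=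
    monotoneOn_Ici_of_hasDerivAt_nonneg
      (fun r hr => ((hR r hr).2.1.fun_mul ((hasDerivAt_id r).const_mul k).exp).fun_neg)
      (fun r hr => by
        have := mul_le_mul_of_nonneg_right (hR r hr).2.2 (Real.exp_pos (k * r)).le
        simp only [id]
        linarith)
  refine IsBigO.of_bound (u R * Real.exp (k * R)) ((eventually_ge_atTop R).mono fun r hr => ?_)
  have := hanti self_mem_Ici hr hr
  rw [Real.norm_eq_abs, Real.norm_eq_abs, abs_of_pos (hR r hr).1, abs_of_pos (Real.exp_pos _),
    neg_mul, Real.exp_neg, ← div_eq_mul_inv, le_div_iff₀ (Real.exp_pos _)]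
  simp only at this
  linarith

lemma isBigO_rpow_inv_of_isBigO_exp {u : ℝ → ℝ} {k s : ℝ} (hk : 0 < k) (hs : 0 < s)
    (hu : u =O[atTop] fun r => Real.exp (-k * r)) :
    (fun r => u r ^ s) =O[atTop] fun r => r⁻¹ := by
  have h := hu.rpow hs.le (Eventually.of_forall fun r => (Real.exp_pos _).le)
  simp_rw [← Real.exp_mul] at h
  refine h.trans ?_
  have := (isLittleO_exp_neg_mul_rpow_atTop (mul_pos hk hs) (-1)).isBigO
  refine (this.congr_left fun r => by ring_nf).trans ?_
  refine (isBigO_refl _ _).congr' ?_ EventuallyEq.rfl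
  filter_upwards [eventually_gt_atTop 0] with r hr
  exact (Real.rpow_neg_one r).symm

lemma isBigO_div_rpow_inv {μ p : ℝ} (hp : 1 ≤ p) :
    (fun r : ℝ => μ / r ^ p) =O[atTop] fun r => r⁻¹ := by
  refine IsBigO.of_bound |μ| ((eventually_ge_atTop 1).mono fun r hr => ?_)
  have hr0 : 0 < r := by linarith
  have hrp : r ≤ r ^ p := by
    simpa using Real.rpow_le_rpow_of_exponent_le hr hp
  rw [Real.norm_eq_abs, Real.norm_eq_abs, abs_div, abs_of_pos (Real.rpow_pos_of_pos hr0 p),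
    abs_inv, abs_of_pos hr0, ← div_eq_mul_inv]
  exact div_le_div_of_nonneg_left (abs_nonneg μ) hr0 hrp

lemma isBigO_comp_div_rpow {f u : ℝ → ℝ} {A p q t₀ : ℝ}
    (hf : ∀ t : ℝ, |t| ≤ t₀ → |f t| ≤ A * |t| ^ (q - 1)) (ht₀ : 0 < t₀)
    (hu0 : Tendsto u atTop (𝓝 0)) (hu_pos : ∀ᶠ r in atTop, 0 < u r) :
    (fun r => f (u r) / u r ^ (p - 1)) =O[atTop] fun r => u r ^ (q - p) := by
  refine IsBigO.of_bound A ?_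
  filter_upwards [hu_pos, hu0.eventually (Iio_mem_nhds ht₀)] with r hr hrt
  have hfr := hf (u r) (by rw [abs_of_pos hr]; exact hrt.le)
  rw [abs_of_pos hr] at hfr
  have hV := Real.rpow_pos_of_pos hr (p - 1)
  rw [Real.norm_eq_abs, Real.norm_eq_abs, abs_div, abs_of_pos hV,
    abs_of_pos (Real.rpow_pos_of_pos hr _), div_le_iff₀ hV, mul_assoc, ← Real.rpow_add hr]
  ring_nf at hfr ⊢
  exact hfr

lemma abs_rpow_mul_self_of_neg {x q : ℝ} (hx : x < 0) : |x| ^ q * x = -(-x) ^ (q + 1) := by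
  rw [abs_of_neg hx, Real.rpow_add_one (by linarith)]; ring

lemma neg_abs_rpow_mul_div_rpow {p v w : ℝ} (hv : 0 < v) (hw : w < 0) :
    -(|w| ^ (p - 2) * w) / v ^ (p - 1) = (-w / v) ^ (p - 1) := by
  rw [abs_rpow_mul_self_of_neg hw, Real.div_rpow (by linarith) hv.le]; ring_nf

lemma hasDerivAt_riccati {n p G r : ℝ} {u u' φ : ℝ → ℝ} (hp : p ≠ 1) (hr : 0 < r)
    (hu : HasDerivAt u (u' r) r) (hur : 0 < u r) (hu'r : u' r < 0)
    (hflux : HasDerivAt (fun s => s ^ (n - 1) * |u' s| ^ (p - 2) * u' s) (-(r ^ (n - 1) * G)) r)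
    (hφ : ∀ᶠ s in 𝓝 r, φ s = -(|u' s| ^ (p - 2) * u' s) / u s ^ (p - 1)) :
    HasDerivAt φ ((p - 1) * φ r ^ (p / (p - 1)) - (n - 1) * φ r / r + G / u r ^ (p - 1)) r := by
  -- first differentiate the unweighted flux `|u'|^{p-2} u' = s^{1-n} (s^{n-1} |u'|^{p-2} u')`
  have hj : HasDerivAt (fun s => |u' s| ^ (p - 2) * u' s) (-(r ^ (n - 1) * G) * r ^ (1 - n) +
      r ^ (n - 1) * |u' r| ^ (p - 2) * u' r * ((1 - n) * r ^ (1 - n - 1))) r := by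
    refine (hflux.fun_mul (Real.hasDerivAt_rpow_const (Or.inl hr.ne'))).congr_of_eventuallyEq ?_
    filter_upwards [eventually_gt_nhds hr] with s hs
    have : s ^ (n - 1) * s ^ (1 - n) = 1 := by rw [← Real.rpow_add hs]; norm_num
    linear_combination (-(|u' s| ^ (p - 2) * u' s)) * this
  refine (((hj.fun_neg).fun_div (hu.rpow_const (p := p - 1) (Or.inl hur.ne'))
    (Real.rpow_pos_of_pos hur _).ne').congr_of_eventuallyEq hφ).congr_deriv ?_
  set v := u r
  set w := -u' r
  have hw : 0 < w := by simp only [w]; linarith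
  have hjr : |u' r| ^ (p - 2) * u' r = -(w ^ (p - 1)) := by
    rw [abs_rpow_mul_self_of_neg hu'r, show p - 2 + 1 = p - 1 by ring]
  have hφr : φ r = w ^ (p - 1) / v ^ (p - 1) := by
    rw [hφ.self_of_nhds, neg_abs_rpow_mul_div_rpow hur hu'r, Real.div_rpow hw.le hur.le]
  have hφP : φ r ^ (p / (p - 1)) = w ^ (p - 1) * w / (v ^ (p - 1) * v) := by
    rw [hφr, ← Real.div_rpow hw.le hur.le, ← Real.rpow_mul (div_nonneg hw.le hur.le),
      mul_div_cancel₀ _ (sub_ne_zero.2 hp), Real.div_rpow hw.le hur.le,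
      ← Real.rpow_add_one hw.ne', ← Real.rpow_add_one hur.ne']
    ring_nf
  have hr1 : r ^ (n - 1) * r ^ (1 - n) = 1 := by rw [← Real.rpow_add hr]; norm_num
  have hr2 : r ^ (n - 1) * r ^ (1 - n - 1) * r = 1 := by
    rw [← Real.rpow_add hr, ← Real.rpow_add_one hr.ne']; ring_nf; exact Real.rpow_zero r
  have hv : v ^ (p - 1 - 1) * v = v ^ (p - 1) := by
    rw [← Real.rpow_add_one hur.ne']; ring_nf
  rw [mul_assoc _ _ (u' r), hjr, hφP, hφr]
  have hu'w : u' r = -w := by simp only [w]; ring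
  rw [hu'w]
  field_simp
  linear_combination (G * v ^ (p - 1) * v * r) * hr1
    + ((1 - n) * w ^ (p - 1) * v ^ (p - 1) * v) * hr2 + ((p - 1) * w ^ (p - 1) * w * r) * hv

lemma abs_rpow_mul_self_nonneg_iff {x q : ℝ} : 0 ≤ |x| ^ q * x ↔ 0 ≤ x := by
  rcases eq_or_ne x 0 with rfl | hx
  · simp
  · rw [mul_nonneg_iff_of_pos_left (Real.rpow_pos_of_pos (abs_pos.2 hx) q)]

lemma deriv_neg_of_monotoneOn {u u' g : ℝ → ℝ} {R : ℝ} (hu0 : Tendsto u atTop (𝓝 0))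
    (hu_pos : ∀ r ≥ R, 0 < u r) (hu : ∀ r ≥ R, HasDerivAt u (u' r) r)
    (hg : MonotoneOn g (Ici R)) (hsign : ∀ r ≥ R, 0 ≤ g r ↔ 0 ≤ u' r) :
    ∀ r ≥ R, u' r < 0 := by
  intro r₀ hr₀
  by_contra! h
  have hu'nonneg : ∀ x ≥ r₀, 0 ≤ u' x := fun x hx =>
    (hsign x (hr₀.trans hx)).1 (((hsign r₀ hr₀).2 h).trans (hg hr₀ (hr₀.trans hx) hx))
  have hmono := monotoneOn_Ici_of_hasDerivAt_nonneg (fun x hx => hu x (hr₀.trans hx)) hu'nonneg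
  have := ge_of_tendsto hu0 ((eventually_ge_atTop r₀).mono fun x hx => hmono self_mem_Ici hx hx)
  linarith [hu_pos r₀ hr₀]

lemma eventually_deriv_neg_of_hasDerivAt_flux {n p : ℝ} {u u' G : ℝ → ℝ}
    (hu0 : Tendsto u atTop (𝓝 0))
    (hu : ∀ᶠ r in atTop, 0 < u r ∧ HasDerivAt u (u' r) r ∧
      HasDerivAt (fun s => s ^ (n - 1) * |u' s| ^ (p - 2) * u' s) (-(r ^ (n - 1) * G r)) r ∧
      G r ≤ 0) :
    ∀ᶠ r in atTop, u' r < 0 := by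
  obtain ⟨R, hR⟩ := eventually_atTop.1 (hu.and (eventually_gt_atTop 0))
  refine eventually_atTop.2 ⟨R, deriv_neg_of_monotoneOn hu0 (fun r hr => (hR r hr).1.1)
    (fun r hr => (hR r hr).1.2.1) (monotoneOn_Ici_of_hasDerivAt_nonneg
      (fun r hr => (hR r hr).1.2.2.1) fun r hr => ?_) fun r hr => ?_⟩
  · have := Real.rpow_pos_of_pos (hR r hr).2 (n - 1)
    nlinarith [(hR r hr).1.2.2.2]
  · rw [mul_assoc, mul_nonneg_iff_of_pos_left (Real.rpow_pos_of_pos (hR r hr).2 _),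
      abs_rpow_mul_self_nonneg_iff]

noncomputable def riccatiForcing (μ p : ℝ) (f u : ℝ → ℝ) (r : ℝ) : ℝ :=
  μ / r ^ p + f (u r) / u r ^ (p - 1)

section RadialProfile

variable {n p μ m : ℝ} {f u u' φ : ℝ → ℝ}

lemma source_eq_riccatiForcing {r : ℝ} (hur : 0 < u r) :
    μ / r ^ p * u r ^ (p - 1) - m * u r ^ (p - 1) + f (u r) =
      (riccatiForcing μ p f u r - m) * u r ^ (p - 1) := by
  have := (Real.rpow_pos_of_pos hur (p - 1)).ne'
  simp only [riccatiForcing]; field_simp; ring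

lemma tendsto_riccatiForcing {A q t₀ : ℝ} (hp : 1 ≤ p) (hq : p < q) (ht₀ : 0 < t₀)
    (hf : ∀ t : ℝ, |t| ≤ t₀ → |f t| ≤ A * |t| ^ (q - 1))
    (hu0 : Tendsto u atTop (𝓝 0)) (hu_pos : ∀ᶠ r in atTop, 0 < u r) :
    Tendsto (riccatiForcing μ p f u) atTop (𝓝 0) := by
  have hμ := (isBigO_div_rpow_inv (μ := μ) hp).trans_tendsto tendsto_inv_atTop_zero
  have hf := (isBigO_comp_div_rpow (p := p) hf ht₀ hu0 hu_pos).trans_tendsto (by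
    simpa [Real.zero_rpow (sub_pos.2 hq).ne'] using hu0.rpow_const (Or.inr (sub_pos.2 hq).le))
  rw [← add_zero 0]
  exact hμ.add hf

lemma riccatiForcing_isBigO_inv {A q t₀ k : ℝ} (hp : 1 ≤ p) (hq : p < q) (ht₀ : 0 < t₀)
    (hf : ∀ t : ℝ, |t| ≤ t₀ → |f t| ≤ A * |t| ^ (q - 1))
    (hu0 : Tendsto u atTop (𝓝 0)) (hu_pos : ∀ᶠ r in atTop, 0 < u r) (hk : 0 < k)
    (hdecay : u =O[atTop] fun r => Real.exp (-k * r)) :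
    riccatiForcing μ p f u =O[atTop] fun r => r⁻¹ :=
  (isBigO_div_rpow_inv hp).add ((isBigO_comp_div_rpow hf ht₀ hu0 hu_pos).trans
    (isBigO_rpow_inv_of_isBigO_exp hk (sub_pos.2 hq) hdecay))

lemma eventually_deriv_neg_of_radial (hm : 0 < m) (hu_pos : ∀ r : ℝ, 0 < r → 0 < u r)
    (hu' : ∀ r : ℝ, 0 < r → HasDerivAt u (u' r) r)
    (hS : ∀ r : ℝ, 0 < r →
      HasDerivAt (fun s : ℝ => s ^ (n - 1) * |u' s| ^ (p - 2) * u' s)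
        (-(r ^ (n - 1) * (μ / r ^ p * u r ^ (p - 1) - m * u r ^ (p - 1) + f (u r)))) r)
    (hu0 : Tendsto u atTop (𝓝 0)) (he : Tendsto (riccatiForcing μ p f u) atTop (𝓝 0)) :
    ∀ᶠ r in atTop, u' r < 0 := by
  refine eventually_deriv_neg_of_hasDerivAt_flux (n := n) (p := p)
    (G := fun r => μ / r ^ p * u r ^ (p - 1) - m * u r ^ (p - 1) + f (u r)) hu0 ?_
  filter_upwards [eventually_gt_atTop 0, he.eventually (Iic_mem_nhds hm)] with r hr her
  refine ⟨hu_pos r hr, hu' r hr, hS r hr, ?_⟩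
  rw [source_eq_riccatiForcing (hu_pos r hr)]
  exact mul_nonpos_of_nonpos_of_nonneg (by linarith) (Real.rpow_pos_of_pos (hu_pos r hr) _).le

lemma eventually_hasDerivAt_riccati_of_radial (hp : 1 < p)
    (hu_pos : ∀ r : ℝ, 0 < r → 0 < u r) (hu' : ∀ r : ℝ, 0 < r → HasDerivAt u (u' r) r)
    (hS : ∀ r : ℝ, 0 < r →
      HasDerivAt (fun s : ℝ => s ^ (n - 1) * |u' s| ^ (p - 2) * u' s)
        (-(r ^ (n - 1) * (μ / r ^ p * u r ^ (p - 1) - m * u r ^ (p - 1) + f (u r)))) r)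
    (hφ : ∀ r : ℝ, 0 < r → φ r = -(|u' r| ^ (p - 2) * u' r) / u r ^ (p - 1))
    (hneg : ∀ᶠ r in atTop, u' r < 0) :
    ∀ᶠ r in atTop, 0 < φ r ∧ HasDerivAt φ
      ((p - 1) * φ r ^ (p / (p - 1)) - m - (n - 1) * φ r / r + riccatiForcing μ p f u r) r := by
  filter_upwards [eventually_gt_atTop 0, hneg] with r hr hu'r
  have hur := hu_pos r hr
  refine ⟨?_, (hasDerivAt_riccati hp.ne' hr (hu' r hr) hur hu'r (hS r hr)
    ((eventually_gt_nhds hr).mono hφ)).congr_deriv ?_⟩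
  · rw [hφ r hr, neg_abs_rpow_mul_div_rpow hur hu'r]
    exact Real.rpow_pos_of_pos (div_pos (neg_pos.2 hu'r) hur) _
  · rw [source_eq_riccatiForcing hur, mul_div_cancel_right₀ _ (Real.rpow_pos_of_pos hur _).ne']
    ring

lemma isBigO_exp_of_le_riccati {b : ℝ} (hp : 1 < p) (hb : 0 < b)
    (hu_pos : ∀ r : ℝ, 0 < r → 0 < u r) (hu' : ∀ r : ℝ, 0 < r → HasDerivAt u (u' r) r)
    (hφ : ∀ r : ℝ, 0 < r → φ r = -(|u' r| ^ (p - 2) * u' r) / u r ^ (p - 1))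
    (hneg : ∀ᶠ r in atTop, u' r < 0) (hφb : ∀ᶠ r in atTop, b ≤ φ r) :
    u =O[atTop] fun r => Real.exp (-b ^ (p - 1)⁻¹ * r) := by
  have hp0 : 0 < p - 1 := sub_pos.2 hp
  refine isBigO_exp_of_hasDerivAt_le (u' := u') ?_
  filter_upwards [eventually_gt_atTop 0, hneg, hφb] with r hr hu'r hφr
  have hur := hu_pos r hr
  -- `b ≤ φ = (-u'/u)^{p-1}` means `b^{1/(p-1)} ≤ -u'/u`
  rw [hφ r hr, neg_abs_rpow_mul_div_rpow hur hu'r, ← Real.rpow_inv_rpow hb.le hp0.ne',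
    Real.rpow_le_rpow_iff (by positivity) (div_pos (neg_pos.2 hu'r) hur).le hp0,
    le_div_iff₀ hur] at hφr
  exact ⟨hur, hu' r hr, by linarith⟩

end RadialProfile

theorem stmt_17_general
    (N : ℕ) (p μ m : ℝ)
    (hp1 : 1 < p)
    (hm : 0 < m)
    (f : ℝ → ℝ)
    (hF0 : ∃ A > (0:ℝ), ∃ q > p, ∃ t₀ > (0:ℝ),
      ∀ t : ℝ, |t| ≤ t₀ → |f t| ≤ A * |t| ^ (q - 1))
    (u u' : ℝ → ℝ)
    (hu_pos : ∀ r : ℝ, 0 < r → 0 < u r)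
    (hu' : ∀ r : ℝ, 0 < r → HasDerivAt u (u' r) r)
    (hS : ∀ r : ℝ, 0 < r →
      HasDerivAt (fun s : ℝ => s ^ ((N : ℝ) - 1) * |u' s| ^ (p - 2) * u' s)
        (-(r ^ ((N : ℝ) - 1) *
          (μ / r ^ p * u r ^ (p - 1) - m * u r ^ (p - 1) + f (u r)))) r)
    (hu0 : Tendsto u atTop (𝓝 0))
    (φ : ℝ → ℝ)
    (hφ : ∀ r : ℝ, 0 < r →
      φ r = -(|u' r| ^ (p - 2) * u' r) / u r ^ (p - 1)) :
    (fun r : ℝ => φ r - (m / (p - 1)) ^ ((p - 1) / p)) =O[atTop]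
      fun r : ℝ => 1 / r := by
  obtain ⟨A, -, q, hq, t₀, ht₀, hf⟩ := hF0
  have hp0 : 0 < p - 1 := sub_pos.2 hp1
  set P := p / (p - 1)
  set c := (m / (p - 1)) ^ ((p - 1) / p)
  have hP : 1 < P := by rw [lt_div_iff₀ hp0]; linarith
  have hc : 0 < c := by positivity
  have hcm : (p - 1) * c ^ P = m := by
    have hexp : (p - 1) / p * P = 1 := by simp only [P]; field_simp
    rw [← Real.rpow_mul (by positivity), hexp, Real.rpow_one]
    field_simp
  have hu_pos' : ∀ᶠ r in atTop, 0 < u r := (eventually_gt_atTop 0).mono hu_pos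
  have he := tendsto_riccatiForcing (μ := μ) hp1.le hq ht₀ hf hu0 hu_pos'
  have hneg := eventually_deriv_neg_of_radial hm hu_pos hu' hS hu0 he
  have hric := eventually_hasDerivAt_riccati_of_radial hp1 hu_pos hu' hS hφ hneg
  have hlim : Tendsto φ atTop (𝓝 c) := tendsto_of_riccati hp0 hP hc hcm he hric
  have hdecay := isBigO_exp_of_le_riccati hp1 (half_pos hc) hu_pos hu' hφ hneg
    (hlim.eventually (Ici_mem_nhds (half_lt_self hc)))
  have hdrift : (fun r => ((N : ℝ) - 1) * φ r / r) =O[atTop] fun r => r⁻¹ := by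
    simpa [div_eq_mul_inv] using
      ((hlim.isBigO_one ℝ).const_mul_left ((N : ℝ) - 1)).mul (isBigO_refl (fun r : ℝ => r⁻¹) atTop)
  have hE := hdrift.neg_left.add (riccatiForcing_isBigO_inv (μ := μ) hp1.le hq ht₀ hf hu0 hu_pos'
    (by positivity) hdecay)
  simpa only [one_div] using isBigO_sub_of_riccati hp0 hP.le hc hcm hlim hE
    (hric.mono fun r h => h.2.congr_deriv (by ring))

theorem stmt_17
    (N : ℕ) (hN : 2 ≤ N) (p μ m : ℝ)
    (hp1 : 1 < p) (hpN : p < N)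
    (hμ0 : 0 ≤ μ) (hμ : μ < (((N : ℝ) - p) / p) ^ p)
    (hm : 0 < m)
    (f : ℝ → ℝ) (hf : Continuous f)
    (hF0 : ∃ A > (0:ℝ), ∃ q > p, ∃ t₀ > (0:ℝ),
      ∀ t : ℝ, |t| ≤ t₀ → |f t| ≤ A * |t| ^ (q - 1))
    (u u' : ℝ → ℝ)
    (hu_pos : ∀ r : ℝ, 0 < r → 0 < u r)
    (hu' : ∀ r : ℝ, 0 < r → HasDerivAt u (u' r) r)
    (hS : ∀ r : ℝ, 0 < r →
      HasDerivAt (fun s : ℝ => s ^ ((N : ℝ) - 1) * |u' s| ^ (p - 2) * u' s)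
        (-(r ^ ((N : ℝ) - 1) *
          (μ / r ^ p * u r ^ (p - 1) - m * u r ^ (p - 1) + f (u r)))) r)
    (hu0 : Tendsto u atTop (𝓝 0))
    (φ : ℝ → ℝ)
    (hφ : ∀ r : ℝ, 0 < r →
      φ r = -(|u' r| ^ (p - 2) * u' r) / u r ^ (p - 1)) :
    (fun r : ℝ => φ r - (m / (p - 1)) ^ ((p - 1) / p)) =O[atTop]
      fun r : ℝ => 1 / r :=
  stmt_17_general N p μ m hp1 hm f hF0 u u' hu_pos hu' hS hu0 φ hφ
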